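/- arXiv:1311.6544 — 3 statements merged into one kernel-verified Lean document; each statement's English description precedes it below -/
import Mathlib

section
/- Let X be a topological space and n an integer with 1 < n < ω. Suppose there exists A ⊆ X with |A| = n − 1 such that A = ⋂{cl_θ(⋂C) : C a choice of closed neighborhoods of the points of A} and for every B ⊆ X with |B| ≥ n, ⋂{cl_θ(⋂C) : C a choice of closed neighborhoods of the points of B} = ∅. Then U(X) = n. -/
open Set Topology Cardinal

universe u

variable {X : Type u}

/-- The θ-closure of a set. -/
def thetaCl [TopologicalSpace X] (A : Set X) : Set X :=
  {x | ∀ U : Set X, IsOpen U → x ∈ U → (closure U ∩ A).Nonempty}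

/-- The θ-closed hull of a set. -/
def thetaHull [TopologicalSpace X] (A : Set X) : Set X :=
  ⋂₀ {C : Set X | thetaCl C = C ∧ A ⊆ C}

/-- A nonempty set is finitely non-Urysohn if every finite choice of closed
neighborhoods (closures of open neighborhoods) of finitely many of its points
has nonempty intersection. -/
def FinNonUrysohn [TopologicalSpace X] (A : Set X) : Prop :=
  A.Nonempty ∧ ∀ F : Set X, F ⊆ A → F.Nonempty → F.Finite →
    ∀ U : X → Set X, (∀ x ∈ F, IsOpen (U x) ∧ x ∈ U x) →
      (⋂ x ∈ F, closure (U x)).Nonempty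

/-- The non-Urysohn number `nu(X)`. -/
noncomputable def nuNumber (X : Type u) [TopologicalSpace X] : Cardinal.{u} :=
  1 + ⨆ A : {A : Set X // FinNonUrysohn A}, #↥A.1

/-- The Urysohn number `U(X)`. -/
noncomputable def UrysohnNumber (X : Type u) [TopologicalSpace X] : Cardinal.{u} :=
  sInf {κ : Cardinal.{u} | ∀ A : Set X, κ ≤ #↥A → ∃ U : X → Set X,
    (∀ a ∈ A, IsOpen (U a) ∧ a ∈ U a) ∧ (⋂ a ∈ A, closure (U a)) = ∅}

/-- The cardinal function `κ(X)`: the smallest infinite cardinal such that each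
point has a family of at most that many closed neighborhoods cofinal (under
reverse inclusion) in the closures of its open neighborhoods. -/
noncomputable def kappaInv (X : Type u) [TopologicalSpace X] : Cardinal.{u} :=
  sInf {κ : Cardinal.{u} | ℵ₀ ≤ κ ∧ ∀ x : X, ∃ V : Set (Set X), #↥V ≤ κ ∧
    (∀ W ∈ V, IsClosed W ∧ W ∈ nhds x) ∧
    ∀ U : Set X, IsOpen U → x ∈ U → ∃ W ∈ V, W ⊆ closure U}

/-- The character `χ(X)`. -/
noncomputable def chiChar (X : Type u) [TopologicalSpace X] : Cardinal.{u} :=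
  sInf {κ : Cardinal.{u} | ℵ₀ ≤ κ ∧ ∀ x : X, ∃ B : Set (Set X), #↥B ≤ κ ∧
    (∀ U ∈ B, U ∈ nhds x) ∧ ∀ S ∈ nhds x, ∃ U ∈ B, U ⊆ S}

/-- The θ-density `d_θ(X)`. -/
noncomputable def dTheta (X : Type u) [TopologicalSpace X] : Cardinal.{u} :=
  sInf {c : Cardinal.{u} | ∃ A : Set X, thetaCl A = Set.univ ∧ #↥A = c}

/-- The cardinal function `sL_θ(X)`. -/
noncomputable def sLtheta (X : Type u) [TopologicalSpace X] : Cardinal.{u} :=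
  sInf {τ : Cardinal.{u} | ℵ₀ ≤ τ ∧ ∀ A : Set X, ∀ 𝒰 : Set (Set X),
    (∀ U ∈ 𝒰, IsOpen U) → thetaCl A ⊆ ⋃₀ 𝒰 →
    ∃ 𝒱 ⊆ 𝒰, #↥𝒱 ≤ τ ∧ A ⊆ closure (⋃₀ 𝒱)}

/-- The cardinal function `wL_c(X)`. -/
noncomputable def wLc (X : Type u) [TopologicalSpace X] : Cardinal.{u} :=
  sInf {τ : Cardinal.{u} | ℵ₀ ≤ τ ∧ ∀ A : Set X, IsClosed A → ∀ 𝒰 : Set (Set X),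
    (∀ U ∈ 𝒰, IsOpen U) → A ⊆ ⋃₀ 𝒰 →
    ∃ 𝒱 ⊆ 𝒰, #↥𝒱 ≤ τ ∧ A ⊆ closure (⋃₀ 𝒱)}

/-- The almost Lindelöf degree `aL(X)`. -/
noncomputable def aLdeg (X : Type u) [TopologicalSpace X] : Cardinal.{u} :=
  sInf {τ : Cardinal.{u} | ℵ₀ ≤ τ ∧ ∀ 𝒰 : Set (Set X),
    (∀ U ∈ 𝒰, IsOpen U) → ⋃₀ 𝒰 = Set.univ →
    ∃ 𝒱 ⊆ 𝒰, #↥𝒱 ≤ τ ∧ (⋃ V ∈ 𝒱, closure V) = Set.univ}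

/-- `X` is a Urysohn space: distinct points have open neighborhoods with
disjoint closures. -/
def UrysohnSpace (X : Type u) [TopologicalSpace X] : Prop :=
  ∀ x y : X, x ≠ y → ∃ U V : Set X, IsOpen U ∧ IsOpen V ∧ x ∈ U ∧ y ∈ V ∧
    closure U ∩ closure V = ∅

/-- For a set `S`, the intersection over all choices of closed neighborhoods of
the points of `S` of the θ-closures of the intersections of the choices. -/
def capSet [TopologicalSpace X] (S : Set X) : Set X :=
  {y | ∀ U : X → Set X, (∀ a ∈ S, IsOpen (U a) ∧ a ∈ U a) →
    y ∈ thetaCl (⋂ a ∈ S, closure (U a))}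

/-- For a set `M`, the intersection over all nonempty finite `F ⊆ M` and all
choices of open neighborhoods of points of `F` of
`cl_θ(⋂_{x∈F} closure (U x))`. -/
def fnuCap [TopologicalSpace X] (M : Set X) : Set X :=
  {y | ∀ F : Set X, F ⊆ M → F.Nonempty → F.Finite → ∀ U : X → Set X,
    (∀ x ∈ F, IsOpen (U x) ∧ x ∈ U x) →
    y ∈ thetaCl (⋂ x ∈ F, closure (U x))}

theorem nonempty_of_mem_thetaCl [TopologicalSpace X] {s : Set X} {x : X}
    (hx : x ∈ thetaCl s) : s.Nonempty :=
  (hx univ isOpen_univ trivial).mono inter_subset_right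

theorem iInter_closure_nonempty_of_subset_capSet [TopologicalSpace X] {S : Set X}
    (hS : S ⊆ capSet S) (hne : S.Nonempty) {U : X → Set X}
    (hU : ∀ a ∈ S, IsOpen (U a) ∧ a ∈ U a) : (⋂ a ∈ S, closure (U a)).Nonempty :=
  nonempty_of_mem_thetaCl (hS hne.some_mem U hU)

/-- A point `b ∈ S` outside `capSet S` has a neighbourhood `V` whose closure misses
`⋂ a ∈ S, closure (U a)`; shrinking `U b` to `U b ∩ V` makes the intersection empty. -/
theorem exists_iInter_closure_eq_empty_of_notMem_capSet [TopologicalSpace X] {S : Set X}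
    {b : X} (hbS : b ∈ S) (hb : b ∉ capSet S) : ∃ U : X → Set X,
      (∀ a ∈ S, IsOpen (U a) ∧ a ∈ U a) ∧ (⋂ a ∈ S, closure (U a)) = ∅ := by
  classical
  simp only [capSet, thetaCl, mem_ofPred_eq, not_forall, not_nonempty_iff_eq_empty] at hb
  obtain ⟨U, hU, V, hV, hbV, hVU⟩ := hb
  refine ⟨Function.update U b (U b ∩ V), fun a ha => ?_, eq_empty_of_subset_empty fun y hy => ?_⟩
  · rcases eq_or_ne a b with rfl | hab
    · simpa using ⟨(hU a ha).1.inter hV, (hU a ha).2, hbV⟩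
    · simpa [hab] using hU a ha
  · simp only [mem_iInter] at hy
    refine hVU ▸ ⟨closure_mono inter_subset_right (by simpa using hy b hbS),
      mem_iInter₂.2 fun a ha => ?_⟩
    rcases eq_or_ne a b with rfl | hab
    · exact closure_mono inter_subset_left (by simpa using hy a ha)
    · simpa [hab] using hy a ha

theorem urysohnNumber_mem (X : Type u) [TopologicalSpace X] :
    UrysohnNumber X ∈ {κ : Cardinal.{u} | ∀ A : Set X, κ ≤ #↥A → ∃ U : X → Set X,
      (∀ a ∈ A, IsOpen (U a) ∧ a ∈ U a) ∧ (⋂ a ∈ A, closure (U a)) = ∅} :=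
  csInf_mem ⟨Order.succ #X, fun A hA =>
    absurd ((mk_set_le A).trans_lt (Order.lt_succ _)) hA.not_gt⟩

theorem urysohnNumber_le [TopologicalSpace X] {κ : Cardinal.{u}}
    (h : ∀ A : Set X, κ ≤ #↥A → ∃ U : X → Set X,
      (∀ a ∈ A, IsOpen (U a) ∧ a ∈ U a) ∧ (⋂ a ∈ A, closure (U a)) = ∅) :
    UrysohnNumber X ≤ κ :=
  csInf_le' h

theorem lt_urysohnNumber [TopologicalSpace X] {A : Set X}
    (h : ∀ U : X → Set X, (∀ a ∈ A, IsOpen (U a) ∧ a ∈ U a) →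
      (⋂ a ∈ A, closure (U a)).Nonempty) :
    #↥A < UrysohnNumber X := by
  refine lt_of_not_ge fun hle => ?_
  obtain ⟨U, hU, hempty⟩ := urysohnNumber_mem X A hle
  exact (h U hU).ne_empty hempty

theorem statement15 [TopologicalSpace X] (n : ℕ) (hn : 1 < n)
    (A : Set X) (hcard : #↥A = (n - 1 : ℕ)) (hA : A = capSet A)
    (hB : ∀ B : Set X, (n : Cardinal) ≤ #↥B → capSet B = ∅) :
    UrysohnNumber X = n := by
  refine le_antisymm (urysohnNumber_le fun B hnB => ?_) ?_
  · have hB0 : B.Nonempty := by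
      rw [← mk_ne_zero_iff.trans nonempty_coe_sort]
      exact (lt_of_lt_of_le (by exact_mod_cast (zero_lt_one.trans hn)) hnB).ne'
    exact exists_iInter_closure_eq_empty_of_notMem_capSet hB0.some_mem
      (by simp [hB B hnB])
  · have hA0 : A.Nonempty := by
      rw [← nonempty_coe_sort, ← mk_ne_zero_iff, hcard]
      exact_mod_cast (by omega : n - 1 ≠ 0)
    have hlt := lt_urysohnNumber fun U hU =>
      iInter_closure_nonempty_of_subset_capSet hA.subset hA0 hU
    rw [hcard] at hlt
    have hsucc := add_one_le_of_lt hlt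
    rwa [← Nat.cast_add_one, Nat.sub_add_cancel hn.le] at hsucc
end

section
/- Let A be a nonempty subset of a topological space X such that every finite choice of closed neighborhoods of finitely many points of A has nonempty intersection. Then there exists a set M ⊇ A that is maximal finitely non-Urysohn; in particular M satisfies M = ⋂{cl_θ(⋂_{x∈F} closure(U_x)) : F nonempty finite subset of M, U_x an open neighborhood of x}. -/
open Set Topology Cardinal

universe u

variable {X : Type u}

/-!
Being finitely non-Urysohn is a property of finite character, so Zorn's lemma yields a maximal
finitely non-Urysohn `M ⊇ A`. A point `y` lies in `fnuCap M` exactly when every closed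
neighborhood of `y` meets every finite intersection of closed neighborhoods of points of `M`,
i.e. when `insert y M` is still finitely non-Urysohn; by maximality these are the points of `M`.
-/

section

variable [TopologicalSpace X]

theorem FinNonUrysohn.sUnion {c : Set (Set X)} (hc : ∀ t ∈ c, FinNonUrysohn t)
    (hchain : IsChain (· ⊆ ·) c) (hne : c.Nonempty) : FinNonUrysohn (⋃₀ c) := by
  obtain ⟨t, htc⟩ := hne
  refine ⟨(hc t htc).1.mono (subset_sUnion_of_mem htc), fun F hF hFne hFfin U hU => ?_⟩
  obtain ⟨s, hsc, hFs⟩ :=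
    hchain.directedOn.exists_mem_subset_of_finite_of_subset_sUnion ⟨t, htc⟩ hFfin hF
  exact (hc s hsc).2 F hFs hFne hFfin U hU

theorem exists_maximal_finNonUrysohn_superset {A : Set X} (hA : FinNonUrysohn A) :
    ∃ M, A ⊆ M ∧ Maximal FinNonUrysohn M :=
  zorn_subset_nonempty {B | FinNonUrysohn B}
    (fun c hc hchain hne => ⟨⋃₀ c, .sUnion hc hchain hne, fun _ => subset_sUnion_of_mem⟩) A hA

/-- A point may carry several neighborhoods, since they can be intersected into one. -/
theorem FinNonUrysohn.iInter_closure_nonempty {A : Set X} (hA : FinNonUrysohn A)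
    {ι : Type*} [Finite ι] [Nonempty ι] (a : ι → X) (ha : ∀ i, a i ∈ A)
    (V : ι → Set X) (hV : ∀ i, IsOpen (V i) ∧ a i ∈ V i) :
    (⋂ i, closure (V i)).Nonempty := by
  set U : X → Set X := fun x => ⋂ (i) (_ : a i = x), V i
  have hU : ∀ x ∈ range a, IsOpen (U x) ∧ x ∈ U x := by
    rintro _ ⟨j, rfl⟩
    refine ⟨isOpen_iInter_of_finite fun i => isOpen_iInter_of_finite fun _ => (hV i).1, ?_⟩
    exact mem_iInter₂.2 fun i hi => hi ▸ (hV i).2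
  obtain ⟨z, hz⟩ := hA.2 (range a) (range_subset_iff.2 ha) (range_nonempty a)
    (finite_range a) U hU
  refine ⟨z, mem_iInter.2 fun i => ?_⟩
  have hzU : z ∈ closure (U (a i)) := mem_iInter₂.1 hz _ (mem_range_self i)
  have hUV : U (a i) ⊆ V i := fun x hx => mem_iInter₂.1 hx i rfl
  exact closure_mono hUV hzU

theorem FinNonUrysohn.subset_fnuCap {M : Set X} (hM : FinNonUrysohn M) : M ⊆ fnuCap M := by
  intro y hy F hFM _ hFfin U hU V hV hyV
  have := hFfin.to_subtype
  obtain ⟨z, hz⟩ := hM.iInter_closure_nonempty (ι := Option F)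
    (fun i => i.elim y Subtype.val) (fun i => i.rec hy fun x => hFM x.2)
    (fun i => i.elim V fun x => U x) (fun i => i.rec ⟨hV, hyV⟩ fun x => hU x x.2)
  rw [mem_iInter, Option.forall] at hz
  exact ⟨z, hz.1, mem_iInter₂.2 fun x hx => hz.2 ⟨x, hx⟩⟩

theorem FinNonUrysohn.insert_of_mem_fnuCap {M : Set X} (hM : FinNonUrysohn M) {y : X}
    (hy : y ∈ fnuCap M) : FinNonUrysohn (insert y M) := by
  refine ⟨insert_nonempty y M, fun F hF hFne hFfin U hU => ?_⟩
  by_cases hyF : y ∈ F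
  swap
  · exact hM.2 F (subset_insert_iff_of_notMem hyF |>.1 hF) hFne hFfin U hU
  rw [← insert_sdiff_self_of_mem hyF, biInter_insert]
  obtain hF' | hF' := (F \ {y}).eq_empty_or_nonempty
  · rw [hF', biInter_empty, inter_univ]
    exact ⟨y, subset_closure (hU y hyF).2⟩
  · exact hy (F \ {y}) (sdiff_singleton_subset_iff.2 hF) hF' hFfin.sdiff U
      (fun x hx => hU x hx.1) (U y) (hU y hyF).1 (hU y hyF).2

theorem fnuCap_subset_of_maximal {M : Set X} (hM : Maximal FinNonUrysohn M) : fnuCap M ⊆ M :=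
  fun y hy => insert_subset_iff.1 (hM.2 (hM.1.insert_of_mem_fnuCap hy) (subset_insert y M)) |>.1

end

theorem statement18 [TopologicalSpace X] (A : Set X) (hA : FinNonUrysohn A) :
    ∃ M : Set X, A ⊆ M ∧ FinNonUrysohn M ∧
      (∀ B : Set X, FinNonUrysohn B → M ⊆ B → M = B) ∧ M = fnuCap M := by
  obtain ⟨M, hAM, hM⟩ := exists_maximal_finNonUrysohn_superset hA
  exact ⟨M, hAM, hM.1, fun B hB hMB => hM.eq_of_subset hB hMB,
    hM.1.subset_fnuCap.antisymm (fnuCap_subset_of_maximal hM)⟩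
end

section
/- For any subset A of a topological space X, the θ-closed hull [A]_θ can be obtained by iterating the θ-closure operator: setting A_0 = A and A_α = cl_θ(⋃_{β<α} A_β) for 0 < α ≤ κ(X)⁺, one has [A]_θ = A_{κ(X)⁺}. -/
open Set Topology Cardinal

universe u

variable {X : Type u}

/-- Transfinite iteration of the θ-closure: `thetaIter A 0 = A` and
`thetaIter A α = cl_θ(⋃_{β<α} thetaIter A β)` for `α > 0`. -/
noncomputable def thetaIter [TopologicalSpace X] (A : Set X) (o : Ordinal.{u}) : Set X :=
  if o = 0 then A
  else thetaCl (⋃ b : {b : Ordinal.{u} // b < o}, thetaIter A b.1)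
termination_by o
decreasing_by exact b.2

section

variable [TopologicalSpace X]

lemma subset_thetaCl (A : Set X) : A ⊆ thetaCl A :=
  fun x hx _ _ hxU => ⟨x, subset_closure hxU, hx⟩

lemma thetaCl_mono {A B : Set X} (h : A ⊆ B) : thetaCl A ⊆ thetaCl B := by
  intro x hx U hU hxU
  obtain ⟨y, hyU, hyA⟩ := hx U hU hxU
  exact ⟨y, hyU, h hyA⟩

lemma inter_nonempty_of_mem_thetaCl {A W : Set X} {x : X} (hx : x ∈ thetaCl A)
    (hW : IsClosed W) (hWx : W ∈ 𝓝 x) : (W ∩ A).Nonempty := by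
  obtain ⟨U, hUW, hU, hxU⟩ := mem_nhds_iff.1 hWx
  obtain ⟨y, hyU, hyA⟩ := hx U hU hxU
  exact ⟨y, closure_minimal hUW hW hyU, hyA⟩

lemma mem_thetaCl_of_forall_inter_nonempty {A : Set X} {x : X} {V : Set (Set X)}
    (hV : ∀ U, IsOpen U → x ∈ U → ∃ W ∈ V, W ⊆ closure U)
    (hA : ∀ W ∈ V, (W ∩ A).Nonempty) : x ∈ thetaCl A := by
  intro U hU hxU
  obtain ⟨W, hWV, hWU⟩ := hV U hU hxU
  obtain ⟨y, hyW, hyA⟩ := hA W hWV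
  exact ⟨y, hWU hyW, hyA⟩

lemma subset_thetaHull (A : Set X) : A ⊆ thetaHull A :=
  fun _ hx _ hC => hC.2 hx

lemma thetaHull_subset {A C : Set X} (hC : thetaCl C = C) (hAC : A ⊆ C) :
    thetaHull A ⊆ C :=
  sInter_subset_of_mem ⟨hC, hAC⟩

lemma thetaCl_thetaHull (A : Set X) : thetaCl (thetaHull A) = thetaHull A := by
  refine Subset.antisymm ?_ (subset_thetaCl _)
  intro x hx C hC
  rw [← hC.1]
  exact thetaCl_mono (fun y hy => mem_sInter.1 hy C hC) hx

lemma aleph0_le_kappaInv_and_exists_closed_nhds (X : Type u) [TopologicalSpace X] :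
    ℵ₀ ≤ kappaInv X ∧ ∀ x : X, ∃ V : Set (Set X), #V ≤ kappaInv X ∧
      (∀ W ∈ V, IsClosed W ∧ W ∈ 𝓝 x) ∧
      ∀ U : Set X, IsOpen U → x ∈ U → ∃ W ∈ V, W ⊆ closure U := by
  refine csInf_mem (s := {κ : Cardinal.{u} | ℵ₀ ≤ κ ∧ ∀ x : X, ∃ V : Set (Set X), #V ≤ κ ∧
      (∀ W ∈ V, IsClosed W ∧ W ∈ 𝓝 x) ∧
      ∀ U : Set X, IsOpen U → x ∈ U → ∃ W ∈ V, W ⊆ closure U})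
    ⟨max ℵ₀ #(Set X), le_max_left _ _, fun x => ?_⟩
  refine ⟨{W | IsClosed W ∧ W ∈ 𝓝 x}, (mk_set_le _).trans (le_max_right _ _),
    fun _ hW => hW, fun U hU hxU => ⟨closure U, ⟨isClosed_closure, ?_⟩, subset_rfl⟩⟩
  exact Filter.mem_of_superset (hU.mem_nhds hxU) subset_closure

namespace thetaIter

variable (A : Set X)

lemma zero_eq : thetaIter A 0 = A := by
  rw [thetaIter, if_pos rfl]

lemma eq_of_ne_zero {o : Ordinal.{u}} (ho : o ≠ 0) :
    thetaIter A o = thetaCl (⋃ b : {b : Ordinal.{u} // b < o}, thetaIter A b.1) := by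
  rw [thetaIter, if_neg ho]

lemma subset_thetaCl_of_lt {b o : Ordinal.{u}} (h : b < o) :
    thetaCl (thetaIter A b) ⊆ thetaIter A o := by
  rw [eq_of_ne_zero A h.ne_bot]
  exact thetaCl_mono (subset_iUnion (fun c : {c : Ordinal.{u} // c < o} => thetaIter A c.1) ⟨b, h⟩)

lemma mono {b o : Ordinal.{u}} (h : b ≤ o) : thetaIter A b ⊆ thetaIter A o := by
  rcases h.eq_or_lt with rfl | h
  · exact subset_rfl
  · exact (subset_thetaCl _).trans (subset_thetaCl_of_lt A h)

lemma subset_thetaHull (o : Ordinal.{u}) : thetaIter A o ⊆ thetaHull A := by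
  induction o using WellFoundedLT.induction with
  | _ o ih =>
    rcases eq_or_ne o 0 with rfl | ho
    · rw [zero_eq]
      exact _root_.subset_thetaHull A
    · rw [eq_of_ne_zero A ho, ← thetaCl_thetaHull A]
      exact thetaCl_mono (iUnion_subset fun b => ih b.1 b.2)

/-- Each point of the θ-closure of the union of the earlier stages is witnessed by at most
`κ(X)` closed neighbourhoods, each of which meets some earlier stage; a cofinality larger
than `κ(X)` bounds all these stages below `o`. -/
lemma thetaCl_iUnion_lt_subset {o : Ordinal.{u}} (ho : Order.IsSuccLimit o)
    (hκ : kappaInv X < o.cof) :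
    thetaCl (⋃ b : {b : Ordinal.{u} // b < o}, thetaIter A b.1) ⊆
      ⋃ b : {b : Ordinal.{u} // b < o}, thetaIter A b.1 := by
  intro x hx
  obtain ⟨V, hV, hVnhds, hVcofinal⟩ := (aleph0_le_kappaInv_and_exists_closed_nhds X).2 x
  have hstage : ∀ W : V, ∃ b < o, (W.1 ∩ thetaIter A b).Nonempty := by
    rintro ⟨W, hW⟩
    obtain ⟨y, hyW, hy⟩ :=
      inter_nonempty_of_mem_thetaCl hx (hVnhds W hW).1 (hVnhds W hW).2
    obtain ⟨b, hyb⟩ := mem_iUnion.1 hy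
    exact ⟨b.1, b.2, y, hyW, hyb⟩
  choose g hgo hgW using hstage
  have hsup : ⨆ W, g W < o := Ordinal.iSup_lt_of_lt_cof (hV.trans_lt hκ) hgo
  refine mem_iUnion.2 ⟨⟨Order.succ (⨆ W, g W), ho.succ_lt hsup⟩, ?_⟩
  refine subset_thetaCl_of_lt A (Order.lt_succ _) ?_
  refine mem_thetaCl_of_forall_inter_nonempty hVcofinal fun W hW => ?_
  obtain ⟨y, hyW, hy⟩ := hgW ⟨W, hW⟩
  exact ⟨y, hyW, mono A (Ordinal.le_iSup g ⟨W, hW⟩) hy⟩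

lemma thetaCl_eq_of_isSuccLimit {o : Ordinal.{u}} (ho : Order.IsSuccLimit o)
    (hκ : kappaInv X < o.cof) : thetaCl (thetaIter A o) = thetaIter A o := by
  have hU : thetaCl (⋃ b : {b : Ordinal.{u} // b < o}, thetaIter A b.1) =
      ⋃ b : {b : Ordinal.{u} // b < o}, thetaIter A b.1 :=
    (thetaCl_iUnion_lt_subset A ho hκ).antisymm (subset_thetaCl _)
  rw [eq_of_ne_zero A ho.ne_bot, hU, hU]

end thetaIter

end

theorem statement19 [TopologicalSpace X] (A : Set X) :
    thetaHull A = thetaIter A ((Order.succ (kappaInv X)).ord) := by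
  have hκ : ℵ₀ ≤ kappaInv X := (aleph0_le_kappaInv_and_exists_closed_nhds X).1
  have hreg : (Order.succ (kappaInv X)).IsRegular := isRegular_succ hκ
  have hclosed := thetaIter.thetaCl_eq_of_isSuccLimit A (isSuccLimit_ord hreg.aleph0_le)
    (by rw [hreg.cof_ord]; exact Order.lt_succ _)
  refine (thetaHull_subset hclosed ?_).antisymm (thetaIter.subset_thetaHull A _)
  simpa only [thetaIter.zero_eq] using thetaIter.mono A zero_le
end
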